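/- Let n ≥ 1, let F be the normalized DFT matrix with entries F_{jk} = e^{2πi jk/n}/√n, and for t ∈ ℝ let γ(t) = F D(t) F* where D(t) = diag(e^{2πikt/n})_{k=0}^{n-1}. Then for every t ∈ ℝ, conj(perm(γ(t))) = e^{2πit(1−n)} · perm(γ(t)); equivalently, e^{−πit(n−1)} · perm(γ(t)) is a real number. -/
import Mathlib


open Matrix

/-- The normalized DFT matrix: `F_{jk} = e^{2πi jk/n}/√n`. -/
noncomputable def dftMatrix (n : ℕ) : Matrix (Fin n) (Fin n) ℂ :=
  Matrix.of fun j k : Fin n =>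
    Complex.exp (2 * (Real.pi : ℂ) * Complex.I * ((j : ℕ) : ℂ) * ((k : ℕ) : ℂ) / (n : ℂ)) /
      ((Real.sqrt n : ℝ) : ℂ)

/-- The geodesic on `U(n)` from the identity to the n-cycle permutation matrix:
`γ(t) = F D(t) F*` with `D(t) = diag(e^{2πikt/n})`. -/
noncomputable def cycleGeodesic (n : ℕ) (t : ℝ) : Matrix (Fin n) (Fin n) ℂ :=
  dftMatrix n *
    Matrix.diagonal (fun k : Fin n =>
      Complex.exp (2 * (Real.pi : ℂ) * Complex.I * ((k : ℕ) : ℂ) * (t : ℂ) / (n : ℂ))) *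
    (dftMatrix n)ᴴ

lemma entry_eq (n : ℕ) (hn : 1 ≤ n) (t : ℝ) (j k : Fin n) :
    cycleGeodesic n t j k =
      ∑ m : Fin n,
        Complex.exp (2 * (Real.pi : ℂ) * Complex.I * (((j:ℕ):ℂ) - ((k:ℕ):ℂ) + (t:ℂ)) * ((m:ℕ):ℂ) / n) / n := by
  have hn0 : (n : ℂ) ≠ 0 := Nat.cast_ne_zero.mpr (by omega)
  have hs : ((Real.sqrt n : ℝ) : ℂ) * ((Real.sqrt n : ℝ) : ℂ) = (n : ℂ) := by
    rw [← Complex.ofReal_mul, Real.mul_self_sqrt (Nat.cast_nonneg n)]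
    norm_num
  simp only [cycleGeodesic, dftMatrix, mul_apply, diagonal_apply, conjTranspose_apply,
    Finset.sum_mul, of_apply]
  rw [Finset.sum_comm]
  refine Finset.sum_congr rfl fun m _ => ?_
  rw [Finset.sum_eq_single m (by intro b _ hb; simp [Ne.symm hb]) (by simp)]
  simp only [if_pos rfl, Complex.star_def, ← Complex.exp_conj, _root_.map_mul, map_div₀,
    Complex.conj_I, Complex.conj_ofReal, map_ofNat, Complex.conj_natCast, if_true]
  rw [div_mul_eq_mul_div, div_mul_div_comm, ← Complex.exp_add, ← Complex.exp_add, hs]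
  congr 1
  field_simp
  ring

lemma conj_entry (n : ℕ) (hn : 1 ≤ n) (t : ℝ) (j k : Fin n) :
    starRingEnd ℂ (cycleGeodesic n t j k) =
      Complex.exp (2 * (Real.pi : ℂ) * Complex.I * (((k:ℕ):ℂ) - ((j:ℕ):ℂ) - (t:ℂ)) * ((n:ℂ) - 1) / n)
        * cycleGeodesic n t j k := by
  have hn0 : (n : ℂ) ≠ 0 := Nat.cast_ne_zero.mpr (by omega)
  rw [entry_eq n hn t j k, map_sum, Finset.mul_sum]
  refine Fintype.sum_equiv Fin.revPerm _ _ fun m => ?_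
  have hm : ((Fin.revPerm m : Fin n) : ℕ) = n - 1 - (m : ℕ) := by
    simp only [Fin.revPerm_apply, Fin.val_rev]; omega
  have hmc : (((Fin.revPerm m : Fin n) : ℕ) : ℂ) = (n : ℂ) - 1 - ((m:ℕ) : ℂ) := by
    rw [hm]
    have h1 : (m : ℕ) ≤ n - 1 := by omega
    push_cast [Nat.cast_sub h1, Nat.cast_sub hn]
    ring
  rw [map_div₀]
  simp only [_root_.map_mul, map_sub, map_add, Complex.conj_I, Complex.conj_ofReal,
    Complex.conj_natCast, map_ofNat, ← Complex.exp_conj, map_div₀]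
  conv_rhs => rw [← mul_div_assoc, ← Complex.exp_add]
  congr 1
  rw [hmc]
  field_simp
  ring

/-- `conj(perm(γ(t))) = e^{2πit(1−n)} · perm(γ(t))`; equivalently
`e^{−πit(n−1)} · perm(γ(t))` is real. -/
theorem conj_permanent_cycleGeodesic (n : ℕ) (hn : 1 ≤ n) (t : ℝ) :
    starRingEnd ℂ (cycleGeodesic n t).permanent
        = Complex.exp (2 * (Real.pi : ℂ) * Complex.I * (t : ℂ) * (1 - (n : ℂ))) *
            (cycleGeodesic n t).permanent ∧
      ∃ r : ℝ,
        Complex.exp (-(Real.pi : ℂ) * Complex.I * (t : ℂ) * ((n : ℂ) - 1)) *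
            (cycleGeodesic n t).permanent = (r : ℂ) := by
  have hn0 : (n : ℂ) ≠ 0 := Nat.cast_ne_zero.mpr (by omega)
  have h1 : starRingEnd ℂ (cycleGeodesic n t).permanent
      = Complex.exp (2 * (Real.pi : ℂ) * Complex.I * (t : ℂ) * (1 - (n : ℂ))) *
        (cycleGeodesic n t).permanent := by
    unfold Matrix.permanent
    rw [map_sum, Finset.mul_sum]
    refine Finset.sum_congr rfl fun σ _ => ?_
    rw [map_prod]
    calc ∏ i : Fin n, starRingEnd ℂ (cycleGeodesic n t (σ i) i)
        = ∏ i : Fin n, (Complex.exp (2 * (Real.pi : ℂ) * Complex.I *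
            ((((i : Fin n) : ℕ):ℂ) - (((σ i : Fin n) : ℕ):ℂ) - (t:ℂ)) * ((n:ℂ) - 1) / n)
            * cycleGeodesic n t (σ i) i) :=
          Finset.prod_congr rfl fun i _ => conj_entry n hn t (σ i) i
      _ = (∏ i : Fin n, Complex.exp (2 * (Real.pi : ℂ) * Complex.I *
            ((((i : Fin n) : ℕ):ℂ) - (((σ i : Fin n) : ℕ):ℂ) - (t:ℂ)) * ((n:ℂ) - 1) / n))
            * ∏ i : Fin n, cycleGeodesic n t (σ i) i := Finset.prod_mul_distrib
      _ = Complex.exp (2 * (Real.pi : ℂ) * Complex.I * (t : ℂ) * (1 - (n : ℂ))) *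
            ∏ i : Fin n, cycleGeodesic n t (σ i) i := by
          congr 1
          rw [← Complex.exp_sum]
          congr 1
          have hsum : ∑ i : Fin n, (((σ i : Fin n) : ℕ) : ℂ) = ∑ i : Fin n, (((i : Fin n) : ℕ) : ℂ) :=
            Fintype.sum_equiv σ _ _ fun i => rfl
          set c : ℂ := 2 * (Real.pi : ℂ) * Complex.I * ((n:ℂ) - 1) / n with hc
          have hterm : ∀ i : Fin n, 2 * (Real.pi : ℂ) * Complex.I *
              ((((i : Fin n) : ℕ):ℂ) - (((σ i : Fin n) : ℕ):ℂ) - (t:ℂ)) * ((n:ℂ) - 1) / n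
              = c * (((i : Fin n) : ℕ):ℂ) - c * (((σ i : Fin n) : ℕ):ℂ) - c * (t:ℂ) := by
            intro i; rw [hc]; field_simp
          rw [Finset.sum_congr rfl fun i _ => hterm i]
          rw [Finset.sum_sub_distrib, Finset.sum_sub_distrib, ← Finset.mul_sum, ← Finset.mul_sum,
            hsum, Finset.sum_const, Finset.card_univ, Fintype.card_fin, nsmul_eq_mul, hc]
          field_simp
          ring
  refine ⟨h1, ?_⟩
  set w := Complex.exp (-(Real.pi : ℂ) * Complex.I * (t : ℂ) * ((n : ℂ) - 1)) *
      (cycleGeodesic n t).permanent with hw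
  have hconj : starRingEnd ℂ w = w := by
    rw [hw, _root_.map_mul, ← Complex.exp_conj, h1]
    simp only [_root_.map_mul, map_sub, map_neg, Complex.conj_I, Complex.conj_ofReal,
      Complex.conj_natCast, RingHom.map_one]
    rw [← mul_assoc, ← Complex.exp_add]
    congr 1
    ring
  exact ⟨w.re, (Complex.conj_eq_iff_re.mp hconj).symm⟩
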